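/- Let F : ℝ → ℝ satisfy ∫_ℝ |F(ξ)|/(ξ²+1) dξ ≤ c₂ < ∞ and suppose F is Lipschitz at 0: there exist c₁, δ > 0 with |F(ξ) - F(0)| ≤ c₁|ξ| for |ξ| < δ. Then there exist C, r₀ > 0 depending only on c₁, c₂, δ, and F(0) such that for all r ≥ r₀, |∫_{-∞}^{∞} F(ξ)σ(rξ) dξ - ∫_0^{∞} F(ξ) dξ| ≤ C r^{-2}. -/

import Mathlib

/-!
Write `σ(r ξ) = 𝟙_{ξ > 0} + e_r(ξ)`. The error `e_r` is odd and `|e_r(ξ)| ≤ exp (-r |ξ|)`, so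
`∫ e_r = 0` and the difference to bound is `∫ (F ξ - F 0) e_r(ξ) dξ`. For `|ξ| < δ` the Lipschitz
bound dominates the integrand by `c₁ |ξ| exp (-r |ξ|)`, whose integral is `2 c₁ / r²`; for
`|ξ| ≥ δ`, `exp (-r |ξ|) ≤ 2 / (r ξ)² ≤ 2 (1 + δ⁻²) / (r² (ξ² + 1))`, and the weighted
integrability of `F` (and of the constant `F 0`) gives another `O(r⁻²)`.
-/

noncomputable def sigmaF (x : ℝ) : ℝ := 1 / (1 + Real.exp (-x))

open MeasureTheory Set Real
open scoped Nat

lemma sigmaF_le_exp (x : ℝ) : sigmaF x ≤ exp x := by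
  have hx : exp x = (exp (-x))⁻¹ := by rw [exp_neg, inv_inv]
  rw [hx, sigmaF, one_div]
  exact inv_anti₀ (exp_pos _) (by linarith)

lemma sigmaF_neg (x : ℝ) : sigmaF (-x) = 1 - sigmaF x := by
  have := exp_pos x
  simp only [sigmaF, neg_neg, exp_neg]
  field_simp
  ring

lemma sigmaF_nonneg (x : ℝ) : 0 ≤ sigmaF x := by
  unfold sigmaF; positivity

lemma continuous_sigmaF : Continuous sigmaF :=
  continuous_const.div (by fun_prop) fun x => by positivity

lemma abs_sigmaF_sub_indicator_le (x : ℝ) :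
    |sigmaF x - (Ioi 0).indicator 1 x| ≤ exp (-|x|) := by
  rcases lt_or_ge 0 x with hx | hx
  · have h := sigmaF_neg x
    rw [indicator_of_mem (mem_Ioi.2 hx), abs_of_pos hx, Pi.one_apply, abs_sub_comm,
      abs_of_nonneg (by linarith [sigmaF_nonneg (-x)])]
    linarith [sigmaF_le_exp (-x)]
  · rw [indicator_of_notMem (by simpa using hx), abs_of_nonpos hx, neg_neg, sub_zero,
      abs_of_nonneg (sigmaF_nonneg x)]
    exact sigmaF_le_exp x

noncomputable def sigmoidStepError (r x : ℝ) : ℝ := sigmaF (r * x) - (Ioi 0).indicator 1 x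

lemma sigmoidStepError_neg (r : ℝ) {x : ℝ} (hx : x ≠ 0) :
    sigmoidStepError r (-x) = -sigmoidStepError r x := by
  rcases hx.lt_or_gt with hx | hx <;>
  simp [sigmoidStepError, sigmaF_neg, hx, hx.not_gt]

lemma abs_sigmoidStepError_le {r : ℝ} (hr : 0 < r) (x : ℝ) :
    |sigmoidStepError r x| ≤ exp (-(r * |x|)) := by
  have h : (Ioi (0:ℝ)).indicator 1 x = (Ioi (0:ℝ)).indicator (1 : ℝ → ℝ) (r * x) := by
    simp only [indicator_apply, mem_Ioi, mul_pos_iff_of_pos_left hr, Pi.one_apply]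
  simpa [sigmoidStepError, abs_mul, abs_of_pos hr, h] using abs_sigmaF_sub_indicator_le (r * x)

lemma measurable_sigmoidStepError (r : ℝ) : Measurable (sigmoidStepError r) :=
  (continuous_sigmaF.measurable.comp (measurable_const_mul r)).sub
    (measurable_const.indicator measurableSet_Ioi)

lemma integral_sigmoidStepError (r : ℝ) : ∫ x, sigmoidStepError r x = 0 := by
  have h_neg : ∫ x, sigmoidStepError r (-x) = -∫ x, sigmoidStepError r x := by
    rw [← integral_neg]
    exact integral_congr_ae <| (Measure.ae_ne volume 0).mono fun x hx => sigmoidStepError_neg r hx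
  linarith [integral_neg_eq_self (sigmoidStepError r) volume]

lemma integral_abs_pow_mul_exp_neg_mul_abs (n : ℕ) {r : ℝ} (hr : 0 < r) :
    ∫ x, |x| ^ n * exp (-(r * |x|)) = 2 * n ! / r ^ (n + 1) := by
  have hn : ((n : ℝ) + 1) = ((n + 1 : ℕ) : ℝ) := by push_cast; ring
  have h := integral_rpow_mul_exp_neg_mul_Ioi (a := n + 1) (by positivity) hr
  simp only [add_sub_cancel_right, rpow_natCast, Gamma_nat_eq_factorial] at h
  rw [hn, rpow_natCast] at h
  rw [integral_comp_abs (f := fun t => t ^ n * exp (-(r * t))), h, one_div_pow]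
  ring

lemma integrable_abs_pow_mul_exp_neg_mul_abs (n : ℕ) {r : ℝ} (hr : 0 < r) :
    Integrable fun x : ℝ => |x| ^ n * exp (-(r * |x|)) :=
  .of_integral_ne_zero <| by rw [integral_abs_pow_mul_exp_neg_mul_abs n hr]; positivity

lemma integrable_sigmoidStepError {r : ℝ} (hr : 0 < r) : Integrable (sigmoidStepError r) :=
  (by simpa using integrable_abs_pow_mul_exp_neg_mul_abs 0 hr : Integrable _).mono'
    (measurable_sigmoidStepError r).aestronglyMeasurable
    (ae_of_all _ (abs_sigmoidStepError_le hr))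

lemma integral_div_sq_add_one (c : ℝ) : ∫ x : ℝ, c / (x ^ 2 + 1) = c * π := by
  simp_rw [div_eq_mul_inv, add_comm _ (1 : ℝ)]
  rw [integral_const_mul, integral_univ_inv_one_add_sq]

lemma integrable_div_sq_add_one (c : ℝ) : Integrable fun x : ℝ => c / (x ^ 2 + 1) := by
  simp_rw [div_eq_mul_inv, add_comm _ (1 : ℝ)]
  exact integrable_inv_one_add_sq.const_mul c

lemma exp_neg_le_two_div_sq {t : ℝ} (ht : 0 < t) : exp (-t) ≤ 2 / t ^ 2 := by
  have h := pow_div_factorial_le_exp t ht.le 2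
  rw [exp_neg, ← inv_div]
  exact inv_anti₀ (by positivity) (by simpa using h)

lemma exp_neg_mul_abs_le {δ r x : ℝ} (hδ : 0 < δ) (hr : 0 < r) (hx : δ ≤ |x|) :
    exp (-(r * |x|)) ≤ 2 * (1 + 1 / δ ^ 2) / (r ^ 2 * (x ^ 2 + 1)) := by
  have hx0 : 0 < |x| := hδ.trans_le hx
  have hx2 : δ ^ 2 ≤ x ^ 2 := by nlinarith [sq_abs x]
  have key : x ^ 2 + 1 ≤ (1 + 1 / δ ^ 2) * x ^ 2 := by
    have : 1 ≤ x ^ 2 / δ ^ 2 := (one_le_div (by positivity)).2 hx2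
    linarith [show (1 + 1 / δ ^ 2) * x ^ 2 = x ^ 2 + x ^ 2 / δ ^ 2 by ring]
  calc exp (-(r * |x|)) ≤ 2 / (r * |x|) ^ 2 := exp_neg_le_two_div_sq (mul_pos hr hx0)
    _ ≤ 2 * (1 + 1 / δ ^ 2) / (r ^ 2 * (x ^ 2 + 1)) := by
      rw [div_le_div_iff₀ (pow_pos (mul_pos hr hx0) 2) (by positivity), mul_pow, sq_abs]
      nlinarith [mul_le_mul_of_nonneg_left key (by positivity : (0:ℝ) ≤ 2 * r ^ 2)]

-- If `f` is not integrable, neither is `f + g`, and both integrals are the junk value `0`.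
lemma abs_integral_add_sub_integral_le {α : Type*} [MeasurableSpace α] {μ : Measure α}
    {f g : α → ℝ} (hg : Integrable g μ) :
    |∫ x, (f x + g x) ∂μ - ∫ x, f x ∂μ| ≤ |∫ x, g x ∂μ| := by
  by_cases hf : Integrable f μ
  · rw [integral_add hf hg, add_sub_cancel_left]
  · rw [integral_undef hf, integral_undef ((integrable_add_iff_integrable_left' hg).not.2 hf)]
    simp

section LocallyLipschitz

variable {F : ℝ → ℝ} {c₁ δ r : ℝ}

lemma abs_sub_mul_sigmoidStepError_le (hδ : 0 < δ) (hr : 0 < r) (hc₁ : 0 ≤ c₁)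
    (hLip : ∀ ξ, |ξ| < δ → |F ξ - F 0| ≤ c₁ * |ξ|) (x : ℝ) :
    |(F x - F 0) * sigmoidStepError r x| ≤ c₁ * (|x| * exp (-(r * |x|))) +
      2 * (1 + 1 / δ ^ 2) / r ^ 2 * (|F x| / (x ^ 2 + 1) + |F 0| / (x ^ 2 + 1)) := by
  have hE := abs_sigmoidStepError_le hr x
  rw [abs_mul]
  rcases lt_or_ge |x| δ with hx | hx
  · calc |F x - F 0| * |sigmoidStepError r x| ≤ c₁ * |x| * exp (-(r * |x|)) :=
          mul_le_mul (hLip x hx) hE (abs_nonneg _) (by positivity)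
      _ ≤ _ := by rw [mul_assoc]; exact le_add_of_nonneg_right (by positivity)
  · calc |F x - F 0| * |sigmoidStepError r x|
        ≤ (|F x| + |F 0|) * (2 * (1 + 1 / δ ^ 2) / (r ^ 2 * (x ^ 2 + 1))) :=
          mul_le_mul (abs_sub _ _) (hE.trans (exp_neg_mul_abs_le hδ hr hx)) (abs_nonneg _)
            (by positivity)
      _ = 2 * (1 + 1 / δ ^ 2) / r ^ 2 * (|F x| / (x ^ 2 + 1) + |F 0| / (x ^ 2 + 1)) := by
          field_simp
      _ ≤ _ := le_add_of_nonneg_left (by positivity)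

lemma integrable_sub_mul_sigmoidStepError (hF : Measurable F)
    (hint : Integrable fun ξ : ℝ => |F ξ| / (ξ ^ 2 + 1)) (hδ : 0 < δ) (hr : 0 < r) (hc₁ : 0 ≤ c₁)
    (hLip : ∀ ξ, |ξ| < δ → |F ξ - F 0| ≤ c₁ * |ξ|) :
    Integrable fun x => (F x - F 0) * sigmoidStepError r x := by
  have h_abs : Integrable fun x : ℝ => |x| * exp (-(r * |x|)) := by
    simpa using integrable_abs_pow_mul_exp_neg_mul_abs 1 hr
  have hG : Integrable fun x => |F x| / (x ^ 2 + 1) + |F 0| / (x ^ 2 + 1) :=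
    hint.add (integrable_div_sq_add_one _)
  exact ((h_abs.const_mul c₁).add (hG.const_mul _)).mono'
    ((hF.sub_const _).mul (measurable_sigmoidStepError r)).aestronglyMeasurable
    (ae_of_all _ (abs_sub_mul_sigmoidStepError_le hδ hr hc₁ hLip))

lemma integrable_mul_sigmoidStepError (hr : 0 < r)
    (h : Integrable fun x => (F x - F 0) * sigmoidStepError r x) :
    Integrable fun x => F x * sigmoidStepError r x := by
  refine (h.add ((integrable_sigmoidStepError hr).const_mul (F 0))).congr
    (ae_of_all _ fun x => ?_)
  simp only [Pi.add_apply]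
  ring

lemma integral_mul_sigmoidStepError (hr : 0 < r)
    (h : Integrable fun x => (F x - F 0) * sigmoidStepError r x) :
    ∫ x, F x * sigmoidStepError r x = ∫ x, (F x - F 0) * sigmoidStepError r x := by
  simp_rw [sub_mul]
  rw [integral_sub (integrable_mul_sigmoidStepError hr h)
    ((integrable_sigmoidStepError hr).const_mul _), integral_const_mul,
    integral_sigmoidStepError, mul_zero, sub_zero]

lemma abs_integral_mul_sigmoidStepError_le {c₂ : ℝ} (hF : Measurable F)
    (hint : Integrable fun ξ : ℝ => |F ξ| / (ξ ^ 2 + 1)) (hc₂ : ∫ ξ, |F ξ| / (ξ ^ 2 + 1) ≤ c₂)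
    (hδ : 0 < δ) (hr : 0 < r) (hc₁ : 0 ≤ c₁) (hLip : ∀ ξ, |ξ| < δ → |F ξ - F 0| ≤ c₁ * |ξ|) :
    |∫ x, F x * sigmoidStepError r x| ≤
      (2 * c₁ + 2 * (1 + 1 / δ ^ 2) * (c₂ + |F 0| * π)) / r ^ 2 := by
  have hA := integrable_sub_mul_sigmoidStepError hF hint hδ hr hc₁ hLip
  have h_abs : Integrable fun x : ℝ => |x| * exp (-(r * |x|)) := by
    simpa using integrable_abs_pow_mul_exp_neg_mul_abs 1 hr
  have hG : Integrable fun x => |F x| / (x ^ 2 + 1) + |F 0| / (x ^ 2 + 1) :=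
    hint.add (integrable_div_sq_add_one _)
  have h_abs_eq : ∫ x : ℝ, |x| * exp (-(r * |x|)) = 2 / r ^ 2 := by
    simpa using integral_abs_pow_mul_exp_neg_mul_abs 1 hr
  rw [integral_mul_sigmoidStepError hr hA]
  calc |∫ x, (F x - F 0) * sigmoidStepError r x|
      ≤ ∫ x, |(F x - F 0) * sigmoidStepError r x| := abs_integral_le_integral_abs
    _ ≤ ∫ x, (c₁ * (|x| * exp (-(r * |x|))) +
          2 * (1 + 1 / δ ^ 2) / r ^ 2 * (|F x| / (x ^ 2 + 1) + |F 0| / (x ^ 2 + 1))) :=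
        integral_mono hA.abs ((h_abs.const_mul c₁).add (hG.const_mul _))
          (abs_sub_mul_sigmoidStepError_le hδ hr hc₁ hLip)
    _ = c₁ * (2 / r ^ 2) + 2 * (1 + 1 / δ ^ 2) / r ^ 2 *
          ((∫ ξ, |F ξ| / (ξ ^ 2 + 1)) + |F 0| * π) := by
        rw [integral_add (h_abs.const_mul c₁) (hG.const_mul _),
          integral_const_mul, integral_const_mul, integral_add hint (integrable_div_sq_add_one _),
          h_abs_eq, integral_div_sq_add_one]
    _ ≤ c₁ * (2 / r ^ 2) + 2 * (1 + 1 / δ ^ 2) / r ^ 2 * (c₂ + |F 0| * π) := by gcongr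
    _ = (2 * c₁ + 2 * (1 + 1 / δ ^ 2) * (c₂ + |F 0| * π)) / r ^ 2 := by ring

end LocallyLipschitz

theorem step_approximation (F : ℝ → ℝ) (hFmeas : Measurable F) (c₁ c₂ δ : ℝ)
    (hδ : 0 < δ)
    (hint : MeasureTheory.Integrable (fun ξ : ℝ => |F ξ| / (ξ ^ 2 + 1)))
    (hc₂ : ∫ ξ : ℝ, |F ξ| / (ξ ^ 2 + 1) ≤ c₂)
    (hLip : ∀ ξ : ℝ, |ξ| < δ → |F ξ - F 0| ≤ c₁ * |ξ|) :
    ∃ C r₀ : ℝ, 0 < C ∧ 0 < r₀ ∧ ∀ r : ℝ, r₀ ≤ r →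
      |(∫ ξ : ℝ, F ξ * sigmaF (r * ξ)) - ∫ ξ in Set.Ioi (0:ℝ), F ξ| ≤ C / r ^ 2 := by
  have hc₂_nonneg : 0 ≤ c₂ := (integral_nonneg fun ξ => by positivity).trans hc₂
  have hc₁ : 0 ≤ c₁ := by
    have h := hLip (δ / 2) (by rw [abs_of_pos (half_pos hδ)]; linarith)
    rw [abs_of_pos (half_pos hδ)] at h
    exact nonneg_of_mul_nonneg_left ((abs_nonneg _).trans h) (half_pos hδ)
  refine ⟨2 * c₁ + 2 * (1 + 1 / δ ^ 2) * (c₂ + |F 0| * π) + 1, 1, by positivity, one_pos,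
    fun r hr => ?_⟩
  have hr_pos : 0 < r := one_pos.trans_le hr
  have h_split (ξ : ℝ) :
      F ξ * sigmaF (r * ξ) = (Ioi 0).indicator F ξ + F ξ * sigmoidStepError r ξ := by
    simp only [sigmoidStepError, indicator_apply, mem_Ioi, Pi.one_apply]
    split_ifs <;> ring
  simp_rw [h_split, ← integral_indicator measurableSet_Ioi]
  calc _ ≤ |∫ ξ, F ξ * sigmoidStepError r ξ| := abs_integral_add_sub_integral_le <|
          integrable_mul_sigmoidStepError hr_pos <|
            integrable_sub_mul_sigmoidStepError hFmeas hint hδ hr_pos hc₁ hLip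
    _ ≤ (2 * c₁ + 2 * (1 + 1 / δ ^ 2) * (c₂ + |F 0| * π)) / r ^ 2 :=
          abs_integral_mul_sigmoidStepError_le hFmeas hint hc₂ hδ hr_pos hc₁ hLip
    _ ≤ _ := by gcongr ?_ / _; linarith
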